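/- For $a>1$ and $j\in\mathbb{N}$ let $\eta_j^{a,0}\in L_2(0,1)$ be the 1-periodic function with Fourier coefficients $\widehat{\eta}_j^{a,0}(k)=e^{2\pi i 2^{-j-1}k}\sqrt{1-\exp\big(-\tfrac{2(k^2+a^2)}{j(j+1)a}\big)}\,\exp\big(-\tfrac{k^2+a^2}{(j+1)a}\big)$. Then for every fixed $j\in\mathbb{N}$, $\lim_{a\to\infty}UC(\eta_j^{a,0})=1/2$. -/

import Mathlib

open Filter

noncomputable section

/-- The sum `∑ₖ cₖ · conj c_{k+1}` appearing in the first trigonometric moment. -/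
def trigSum (c : ℤ → ℂ) : ℂ := ∑' k : ℤ, c k * (starRingEnd ℂ) (c (k + 1))

/-- The first trigonometric moment `τ(f) = -2π ∑ₖ cₖ · conj c_{k+1}`. -/
def tau (c : ℤ → ℂ) : ℂ := -2 * Real.pi * trigSum c

/-- The angular variance of a 1-periodic function given by its Fourier coefficients. -/
def varA (c : ℤ → ℂ) : ℝ :=
  (1 / (4 * Real.pi ^ 2)) *
    ((∑' k : ℤ, ‖c k‖ ^ 2) ^ 2 / ‖trigSum c‖ ^ 2 - 1)

/-- The frequency variance of a 1-periodic function given by its Fourier coefficients. -/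
def varF (c : ℤ → ℂ) : ℝ :=
  (4 * Real.pi ^ 2 * ∑' k : ℤ, (k : ℝ) ^ 2 * ‖c k‖ ^ 2) / (∑' k : ℤ, ‖c k‖ ^ 2) -
    (4 * Real.pi ^ 2 * (∑' k : ℤ, (k : ℝ) * ‖c k‖ ^ 2) ^ 2) /
      (∑' k : ℤ, ‖c k‖ ^ 2) ^ 2

/-- The Breitenberger (periodic) uncertainty constant. -/
def UC (c : ℤ → ℂ) : ℝ := Real.sqrt (varA c * varF c)

/-- Fourier coefficients of the auxiliary wavelet-type function `η_j^{a,0}`. -/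
def etaHat (j : ℕ) (a : ℝ) (k : ℤ) : ℂ :=
  Complex.exp (2 * Real.pi * Complex.I * (((2:ℝ) ^ (-(j:ℝ) - 1) : ℝ) : ℂ) * k) *
    ((Real.sqrt (1 - Real.exp (-(2 * ((k:ℝ) ^ 2 + a ^ 2) / ((j:ℝ) * ((j:ℝ) + 1) * a)))) *
      Real.exp (-(((k:ℝ) ^ 2 + a ^ 2) / (((j:ℝ) + 1) * a))) : ℝ) : ℂ)

namespace UCeta

open Real Topology

def th0 (t : ℝ) : ℝ := ∑' n : ℤ, Real.exp (-t * n ^ 2)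

def th2 (t : ℝ) : ℝ := ∑' n : ℤ, (n : ℝ) ^ 2 * Real.exp (-t * n ^ 2)

def thh (t : ℝ) : ℝ := ∑' n : ℤ, Real.exp (-t * (n + 1 / 2) ^ 2)

def phi (t : ℝ) : ℝ := ∑' n : ℤ, Real.exp (-(Real.pi ^ 2 / t) * n ^ 2)

def psi (t : ℝ) : ℝ := ∑' n : ℤ, (-1 : ℝ) ^ n * Real.exp (-(Real.pi ^ 2 / t) * n ^ 2)

def Dd (t : ℝ) : ℝ := 2 * Real.exp (-(π ^ 2 / t)) / (1 - Real.exp (-(π ^ 2 / t)))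

def FF (t : ℝ) : ℤ → ℝ :=
  fun n => Int.rec (fun m => if m = 0 then 0 else Real.exp (-(π ^ 2 / t)) ^ m)
    (fun m => Real.exp (-(π ^ 2 / t)) ^ (m + 1)) n

lemma summable_exp_sq {c : ℝ} (hc : 0 < c) (s : ℝ) :
    Summable fun n : ℤ => Real.exp (-c * (n + s) ^ 2) := by
  have h := HurwitzKernelBounds.summable_f_int 0 s (div_pos hc Real.pi_pos)
  refine h.congr fun n => ?_
  simp only [HurwitzKernelBounds.f_int, pow_zero, one_mul]
  congr 1
  field_simp

lemma summable_sq_exp_sq {c : ℝ} (hc : 0 < c) :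
    Summable fun n : ℤ => (n : ℝ) ^ 2 * Real.exp (-c * n ^ 2) := by
  have h := HurwitzKernelBounds.summable_f_int 2 0 (div_pos hc Real.pi_pos)
  refine h.congr fun n => ?_
  simp only [HurwitzKernelBounds.f_int, add_zero, sq_abs]
  congr 2
  field_simp

lemma th0_pos {t : ℝ} (ht : 0 < t) : 0 < th0 t :=
  Summable.tsum_pos (by simpa using summable_exp_sq ht 0) (fun n => (Real.exp_pos _).le) 0 (Real.exp_pos _)

lemma th0_eq {t : ℝ} (ht : 0 < t) : th0 t = Real.sqrt (π / t) * phi t := by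
  have h := Real.tsum_exp_neg_mul_int_sq (a := t / π) (div_pos ht Real.pi_pos)
  have h1 : ∀ n : ℤ, Real.exp (-π * (t / π) * n ^ 2) = Real.exp (-t * n ^ 2) := by
    intro n; congr 2; field_simp
  have h2 : ∀ n : ℤ, Real.exp (-π / (t / π) * n ^ 2) = Real.exp (-(π ^ 2 / t) * n ^ 2) := by
    intro n
    have htne : t ≠ 0 := ne_of_gt ht
    have : -π / (t / π) = -(π ^ 2 / t) := by field_simp
    rw [this]
  rw [tsum_congr h1, tsum_congr h2] at h
  rw [th0, h, phi]
  congr 1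
  rw [← Real.sqrt_eq_rpow, one_div, ← Real.sqrt_inv, inv_div]

lemma neg_one_zpow_neg (n : ℤ) : (-1 : ℂ) ^ (-n) = (-1 : ℂ) ^ n := by
  rw [zpow_neg]
  rw [inv_eq_of_mul_eq_one_left ?_]
  rw [← mul_zpow]; norm_num

lemma thh_eq {t : ℝ} (ht : 0 < t) : thh t = Real.sqrt (π / t) * psi t := by
  have ha : (0:ℝ) < ((π / t : ℝ) : ℂ).re := by
    rw [Complex.ofReal_re]; exact div_pos Real.pi_pos ht
  have key := Complex.tsum_exp_neg_quadratic ha (-Complex.I / 2)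
  have htne : t ≠ 0 := ne_of_gt ht
  have hπne : (π:ℝ) ≠ 0 := Real.pi_ne_zero
  -- LHS terms
  have hL : ∀ n : ℤ, Complex.exp (-(π:ℂ) * ((π / t : ℝ) : ℂ) * (n:ℂ) ^ 2
      + 2 * (π:ℂ) * (-Complex.I / 2) * (n:ℂ)) =
      (((-1 : ℝ) ^ n * Real.exp (-(Real.pi ^ 2 / t) * n ^ 2) : ℝ) : ℂ) := by
    intro n
    have e1 : -(π:ℂ) * ((π / t : ℝ) : ℂ) * (n:ℂ) ^ 2 + 2 * (π:ℂ) * (-Complex.I / 2) * (n:ℂ)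
        = ((-(Real.pi ^ 2 / t) * n ^ 2 : ℝ) : ℂ) + (-n : ℤ) * ((π:ℝ) * Complex.I) := by
      push_cast
      field_simp
    rw [e1, Complex.exp_add, Complex.exp_int_mul, Complex.exp_pi_mul_I, neg_one_zpow_neg,
      ← Complex.ofReal_exp]
    push_cast
    ring
  -- RHS terms
  have hR : ∀ n : ℤ, Complex.exp (-(π:ℂ) / ((π / t : ℝ) : ℂ) *
      ((n:ℂ) + Complex.I * (-Complex.I / 2)) ^ 2) =
      ((Real.exp (-t * (n + 1 / 2) ^ 2) : ℝ) : ℂ) := by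
    intro n
    have e1 : -(π:ℂ) / ((π / t : ℝ) : ℂ) * ((n:ℂ) + Complex.I * (-Complex.I / 2)) ^ 2
        = ((-t * (n + 1 / 2) ^ 2 : ℝ) : ℂ) := by
      have : Complex.I * (-Complex.I / 2) = 1 / 2 := by
        rw [show Complex.I * (-Complex.I / 2) = -(Complex.I * Complex.I) / 2 by ring,
          Complex.I_mul_I]
        norm_num
      rw [this]
      push_cast
      have hπc : ((π:ℝ):ℂ) ≠ 0 := by exact_mod_cast Complex.ofReal_ne_zero.mpr hπne
      have htc : (t:ℂ) ≠ 0 := by exact_mod_cast Complex.ofReal_ne_zero.mpr htne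
      field_simp
    rw [e1, ← Complex.ofReal_exp]
  -- the power
  have hpow : (1:ℂ) / ((π / t : ℝ) : ℂ) ^ (1/2 : ℂ) = ((Real.sqrt (t / π) : ℝ) : ℂ) := by
    have h0 : (0:ℝ) ≤ π / t := (div_pos Real.pi_pos ht).le
    rw [show (1/2 : ℂ) = ((1/2 : ℝ) : ℂ) by norm_num, ← Complex.ofReal_cpow h0]
    rw [← Real.sqrt_eq_rpow]
    rw [show Real.sqrt (t/π) = (Real.sqrt (π/t))⁻¹ by rw [← Real.sqrt_inv, inv_div]]
    rw [one_div, ← Complex.ofReal_inv]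
  rw [tsum_congr hL, tsum_congr hR, hpow, ← Complex.ofReal_tsum, ← Complex.ofReal_tsum,
    ← Complex.ofReal_mul] at key
  have key' := Complex.ofReal_inj.mp key
  have hs : Real.sqrt (π / t) * Real.sqrt (t / π) = 1 := by
    rw [← Real.sqrt_mul (div_pos Real.pi_pos ht).le]
    rw [show π / t * (t / π) = 1 by field_simp]
    exact Real.sqrt_one
  calc thh t = Real.sqrt (π/t) * (Real.sqrt (t/π) * thh t) := by
        rw [← mul_assoc, hs, one_mul]
    _ = Real.sqrt (π/t) * psi t := by rw [thh, ← key', psi]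

lemma summable_phi {t : ℝ} (ht : 0 < t) :
    Summable fun n : ℤ => Real.exp (-(Real.pi ^ 2 / t) * n ^ 2) := by
  simpa using summable_exp_sq (div_pos (pow_pos Real.pi_pos 2) ht) 0

lemma summable_psi {t : ℝ} (ht : 0 < t) :
    Summable fun n : ℤ => (-1 : ℝ) ^ n * Real.exp (-(Real.pi ^ 2 / t) * n ^ 2) := by
  refine Summable.of_norm_bounded (summable_phi ht) fun n => ?_
  rw [norm_mul, norm_zpow, norm_neg, norm_one, one_zpow, one_mul,
    Real.norm_eq_abs, Real.abs_exp]

/-- the majorant over `ℤ`. -/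

lemma r_lt_one {t : ℝ} (ht : 0 < t) : Real.exp (-(π ^ 2 / t)) < 1 := by
  rw [Real.exp_lt_one_iff, neg_lt_zero]
  positivity

lemma hasSum_FF {t : ℝ} (ht : 0 < t) : HasSum (FF t) (Dd t) := by
  set r := Real.exp (-(π ^ 2 / t)) with hr
  have hr0 : 0 ≤ r := Real.exp_nonneg _
  have hr1 : r < 1 := r_lt_one ht
  have h0 : HasSum (fun m : ℕ => r ^ (m + 1)) (r / (1 - r)) := by
    have := (hasSum_geometric_of_lt_one hr0 hr1).mul_left r
    rw [show r * (1 - r)⁻¹ = r / (1 - r) by rw [div_eq_mul_inv]] at this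
    refine this.congr_fun fun m => ?_
    rw [pow_succ, mul_comm]
  have h1 : HasSum (fun m : ℕ => if m = 0 then 0 else r ^ m) (r / (1 - r)) := by
    rw [show r / (1 - r) = r / (1 - r) + ∑ i ∈ Finset.range 1, (if i = 0 then (0:ℝ) else r ^ i)
      by simp]
    refine (hasSum_nat_add_iff 1).mp ?_
    refine h0.congr_fun fun m => ?_
    simp
  have := HasSum.int_rec h1 h0
  rw [Dd]
  have e : r / (1 - r) + r / (1 - r) = 2 * r / (1 - r) := by ring
  rw [← hr, ← e]
  exact this

lemma FF_nonneg {t : ℝ} (n : ℤ) : 0 ≤ FF t n := by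
  cases n with
  | ofNat m =>
    show (0:ℝ) ≤ if m = 0 then 0 else Real.exp (-(π ^ 2 / t)) ^ m
    split <;> positivity
  | negSucc m =>
    show (0:ℝ) ≤ Real.exp (-(π ^ 2 / t)) ^ (m + 1)
    positivity

lemma exp_sq_le_aux {t : ℝ} (ht : 0 < t) (m : ℕ) :
    Real.exp (-(π ^ 2 / t) * ((m : ℝ) + 1) ^ 2) ≤ Real.exp (-(π ^ 2 / t)) ^ (m + 1) := by
  rw [← Real.exp_nat_mul, Real.exp_le_exp]
  have hc : 0 < π ^ 2 / t := by positivity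
  have hm : (0:ℝ) ≤ (m : ℝ) := Nat.cast_nonneg m
  push_cast
  have key : (π ^ 2 / t) * (((m:ℝ) + 1) ^ 2 - ((m:ℝ) + 1)) ≥ 0 :=
    mul_nonneg hc.le (by nlinarith)
  linarith

lemma g_le_FF {t : ℝ} (ht : 0 < t) (n : ℤ) (hn : n ≠ 0) :
    Real.exp (-(Real.pi ^ 2 / t) * n ^ 2) ≤ FF t n := by
  cases n with
  | ofNat m =>
    cases m with
    | zero => simp at hn
    | succ m =>
      show _ ≤ Real.exp (-(π ^ 2 / t)) ^ (m + 1)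
      have := exp_sq_le_aux ht m
      refine le_trans (le_of_eq ?_) (by simpa using this)
      push_cast
      norm_num
  | negSucc m =>
    show _ ≤ Real.exp (-(π ^ 2 / t)) ^ (m + 1)
    refine le_trans (le_of_eq ?_) (exp_sq_le_aux ht m)
    congr 1
    push_cast
    ring

lemma one_le_phi {t : ℝ} (ht : 0 < t) : 1 ≤ phi t := by
  have h := Summable.le_tsum (summable_phi ht) 0 (fun j _ => (Real.exp_pos _).le)
  rw [phi]
  simpa using h

lemma summable_dlt_FF {t : ℝ} (ht : 0 < t) :
    Summable fun n : ℤ => (if n = 0 then (1:ℝ) else 0) + FF t n := by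
  refine Summable.add ?_ (hasSum_FF ht).summable
  exact summable_of_ne_finset_zero (s := {0}) (fun n hn => by
    simp only [Finset.mem_singleton] at hn; simp [hn])

lemma phi_sub_one_le {t : ℝ} (ht : 0 < t) : phi t - 1 ≤ Dd t := by
  have hle : phi t ≤ 1 + Dd t := by
    have h1 : ∀ n : ℤ, Real.exp (-(Real.pi ^ 2 / t) * n ^ 2)
        ≤ (if n = 0 then (1:ℝ) else 0) + FF t n := by
      intro n
      by_cases hn : n = 0
      · subst hn
        simp only [if_pos rfl]
        have : FF t (0:ℤ) = 0 := rfl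
        simp [this]
      · simp only [if_neg hn, zero_add]
        exact g_le_FF ht n hn
    have h2 := Summable.tsum_le_tsum h1 (summable_phi ht) (summable_dlt_FF ht)
    rw [Summable.tsum_add (by exact summable_of_ne_finset_zero (s := {0}) (fun n hn => by
        simp only [Finset.mem_singleton] at hn; simp [hn])) (hasSum_FF ht).summable,
      tsum_ite_eq (0:ℤ) (fun _ => (1:ℝ)), (hasSum_FF ht).tsum_eq] at h2
    exact h2
  linarith

lemma psi_le_phi {t : ℝ} (ht : 0 < t) : psi t ≤ phi t := by
  refine Summable.tsum_le_tsum (fun n => ?_) (summable_psi ht) (summable_phi ht)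
  have h1 : (-1:ℝ) ^ n ≤ 1 := by
    rcases Int.even_or_odd n with h | h
    · rw [h.neg_one_zpow]
    · rw [Odd.neg_one_zpow h]; norm_num
  nlinarith [Real.exp_pos (-(Real.pi ^ 2 / t) * (n:ℝ) ^ 2)]

lemma phi_sub_psi_le {t : ℝ} (ht : 0 < t) : phi t - psi t ≤ 2 * Dd t := by
  rw [phi, psi, ← Summable.tsum_sub (summable_phi ht) (summable_psi ht)]
  have h2 : (2:ℝ) * Dd t = ∑' n : ℤ, 2 * FF t n := by
    rw [tsum_mul_left, (hasSum_FF ht).tsum_eq]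
  rw [h2]
  refine Summable.tsum_le_tsum (fun n => ?_) ((summable_phi ht).sub (summable_psi ht))
    ((hasSum_FF ht).summable.mul_left 2)
  by_cases hn : n = 0
  · subst hn
    have : FF t (0:ℤ) = 0 := rfl
    simp [this]
  · have h1 : (-1:ℝ) ^ n ≥ -1 := by
      rcases Int.even_or_odd n with h | h
      · rw [h.neg_one_zpow]; norm_num
      · rw [Odd.neg_one_zpow h]
    have h3 := g_le_FF ht n hn
    nlinarith [Real.exp_pos (-(Real.pi ^ 2 / t) * (n:ℝ) ^ 2)]

lemma psi_ge {t : ℝ} (ht : 0 < t) : 1 - 2 * Dd t ≤ psi t := by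
  have := phi_sub_psi_le ht
  have := one_le_phi ht
  linarith

lemma tendsto_exp_pi_div : Tendsto (fun t : ℝ => Real.exp (-(π ^ 2 / t)))
    (𝓝[>] (0:ℝ)) (𝓝 0) := by
  have h1 : Tendsto (fun t : ℝ => π ^ 2 / t) (𝓝[>] (0:ℝ)) atTop := by
    rw [show (fun t : ℝ => π ^ 2 / t) = fun t : ℝ => π ^ 2 * t⁻¹ by
      funext t; rw [div_eq_mul_inv]]
    exact tendsto_inv_nhdsGT_zero.const_mul_atTop (by positivity)
  have h2 : Tendsto (fun t : ℝ => -(π ^ 2 / t)) (𝓝[>] (0:ℝ)) atBot := tendsto_neg_atTop_atBot.comp h1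
  exact Real.tendsto_exp_atBot.comp h2

lemma tendsto_exp_pi_div_div : Tendsto (fun t : ℝ => Real.exp (-(π ^ 2 / t)) / t)
    (𝓝[>] (0:ℝ)) (𝓝 0) := by
  have h1 : Tendsto (fun t : ℝ => π ^ 2 / t) (𝓝[>] (0:ℝ)) atTop := by
    rw [show (fun t : ℝ => π ^ 2 / t) = fun t : ℝ => π ^ 2 * t⁻¹ by
      funext t; rw [div_eq_mul_inv]]
    exact tendsto_inv_nhdsGT_zero.const_mul_atTop (by positivity)
  have h2 : Tendsto (fun x : ℝ => x * Real.exp (-x)) atTop (𝓝 0) := by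
    simpa using tendsto_pow_mul_exp_neg_atTop_nhds_zero 1
  have h3 := (h2.comp h1).div_const (π ^ 2)
  rw [zero_div] at h3
  refine h3.congr' ?_
  filter_upwards [self_mem_nhdsWithin] with t (ht : 0 < t)
  have : π ^ 2 / t * Real.exp (-(π ^ 2 / t)) / π ^ 2 = Real.exp (-(π ^ 2 / t)) / t := by
    field_simp
  simpa [Function.comp] using this

lemma tendsto_Dd_div : Tendsto (fun t => Dd t / t) (𝓝[>] (0:ℝ)) (𝓝 0) := by
  have h1 : Tendsto (fun t : ℝ => 2 * (Real.exp (-(π ^ 2 / t)) / t) /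
      (1 - Real.exp (-(π ^ 2 / t)))) (𝓝[>] (0:ℝ)) (𝓝 0) := by
    have := ((tendsto_exp_pi_div_div.const_mul 2).div
      ((tendsto_const_nhds.sub tendsto_exp_pi_div)) (by norm_num : (1:ℝ) - 0 ≠ 0))
    rw [mul_zero, zero_div] at this; exact this
  refine h1.congr' ?_
  filter_upwards [self_mem_nhdsWithin] with t (ht : 0 < t)
  rw [Dd]
  ring

lemma tendsto_Dd : Tendsto Dd (𝓝[>] (0:ℝ)) (𝓝 0) := by
  have h1 : Tendsto (fun t : ℝ => Dd t / t * t) (𝓝[>] (0:ℝ)) (𝓝 0) := by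
    have := tendsto_Dd_div.mul (tendsto_id.mono_left nhdsWithin_le_nhds)
    simpa using this
  refine h1.congr' ?_
  filter_upwards [self_mem_nhdsWithin] with t (ht : 0 < t)
  field_simp

lemma tendsto_phi : Tendsto phi (𝓝[>] (0:ℝ)) (𝓝 1) := by
  refine tendsto_of_tendsto_of_tendsto_of_le_of_le' tendsto_const_nhds
    (by simpa using (tendsto_const_nhds (x := (1:ℝ))).add tendsto_Dd) ?_ ?_
  · filter_upwards [self_mem_nhdsWithin] with t (ht : 0 < t) using one_le_phi ht
  · filter_upwards [self_mem_nhdsWithin] with t (ht : 0 < t)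
    have := phi_sub_one_le ht
    linarith

lemma tendsto_psi : Tendsto psi (𝓝[>] (0:ℝ)) (𝓝 1) := by
  have hlow : Tendsto (fun t => 1 - 2 * Dd t) (𝓝[>] (0:ℝ)) (𝓝 1) := by
    simpa using (tendsto_const_nhds (x := (1:ℝ))).sub (tendsto_Dd.const_mul 2)
  refine tendsto_of_tendsto_of_tendsto_of_le_of_le' hlow tendsto_phi ?_ ?_
  · filter_upwards [self_mem_nhdsWithin] with t (ht : 0 < t) using psi_ge ht
  · filter_upwards [self_mem_nhdsWithin] with t (ht : 0 < t) using psi_le_phi ht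

lemma tendsto_sqrt_mul_th0 :
    Tendsto (fun t => Real.sqrt t * th0 t) (𝓝[>] (0:ℝ)) (𝓝 (Real.sqrt π)) := by
  have h1 : Tendsto (fun t => Real.sqrt π * phi t) (𝓝[>] (0:ℝ)) (𝓝 (Real.sqrt π)) := by
    simpa using tendsto_phi.const_mul (Real.sqrt π)
  refine h1.congr' ?_
  filter_upwards [self_mem_nhdsWithin] with t (ht : 0 < t)
  rw [th0_eq ht, ← mul_assoc, ← Real.sqrt_mul ht.le]
  rw [show t * (π / t) = π by field_simp]

lemma tendsto_ratio_th0_thh :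
    Tendsto (fun t => (th0 t / thh t - 1) / t) (𝓝[>] (0:ℝ)) (𝓝 0) := by
  have hpsi_pos : ∀ᶠ t in 𝓝[>] (0:ℝ), 0 < psi t := by
    filter_upwards [tendsto_psi.eventually (eventually_gt_nhds (by norm_num : (0:ℝ) < 1))]
      with t h using h
  have hupper : Tendsto (fun t => 2 * (Dd t / t) / psi t) (𝓝[>] (0:ℝ)) (𝓝 0) := by
    have := (tendsto_Dd_div.const_mul 2).div tendsto_psi (by norm_num)
    rw [mul_zero, zero_div] at this; exact this
  refine tendsto_of_tendsto_of_tendsto_of_le_of_le' tendsto_const_nhds hupper ?_ ?_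
  · filter_upwards [self_mem_nhdsWithin, hpsi_pos] with t (ht : 0 < t) hψ
    have h1 : th0 t / thh t = phi t / psi t := by
      rw [th0_eq ht, thh_eq ht, mul_div_mul_left]
      exact (Real.sqrt_pos.mpr (div_pos Real.pi_pos ht)).ne'
    rw [h1]
    have h2 : 1 ≤ phi t / psi t := (one_le_div hψ).mpr (psi_le_phi ht)
    have := div_nonneg (by linarith : (0:ℝ) ≤ phi t / psi t - 1) ht.le
    linarith
  · filter_upwards [self_mem_nhdsWithin, hpsi_pos] with t (ht : 0 < t) hψ
    have h1 : th0 t / thh t = phi t / psi t := by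
      rw [th0_eq ht, thh_eq ht, mul_div_mul_left]
      exact (Real.sqrt_pos.mpr (div_pos Real.pi_pos ht)).ne'
    rw [h1]
    have h2 : phi t - psi t ≤ 2 * Dd t := phi_sub_psi_le ht
    have h3 : phi t / psi t - 1 = (phi t - psi t) / psi t := by
      field_simp
    rw [h3]
    rw [div_div]
    rw [show 2 * (Dd t / t) / psi t = 2 * Dd t / (psi t * t) by ring]
    have hden : 0 < psi t * t := mul_pos hψ ht
    exact (div_le_div_iff_of_pos_right hden).mpr h2

lemma summable_th0 {t : ℝ} (ht : 0 < t) : Summable fun n : ℤ => Real.exp (-t * n ^ 2) := by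
  simpa using summable_exp_sq ht 0

lemma th0_sub_le {t₁ t₂ : ℝ} (h1 : 0 < t₁) (h12 : t₁ ≤ t₂) :
    th0 t₁ - th0 t₂ ≤ (t₂ - t₁) * th2 t₁ := by
  have h2 : 0 < t₂ := lt_of_lt_of_le h1 h12
  rw [th0, th0, ← Summable.tsum_sub (summable_th0 h1) (summable_th0 h2), th2, ← tsum_mul_left]
  refine Summable.tsum_le_tsum (fun n => ?_) ((summable_th0 h1).sub (summable_th0 h2))
    ((summable_sq_exp_sq h1).mul_left _)
  set c : ℝ := (n:ℝ) ^ 2 with hc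
  have hc0 : 0 ≤ c := sq_nonneg _
  have key : Real.exp (-t₂ * c) = Real.exp (-t₁ * c) * Real.exp (-((t₂ - t₁) * c)) := by
    rw [← Real.exp_add]; ring_nf
  rw [key]
  have hx : 1 - Real.exp (-((t₂ - t₁) * c)) ≤ (t₂ - t₁) * c := by
    have := Real.add_one_le_exp (-((t₂ - t₁) * c))
    linarith
  have hexp : 0 < Real.exp (-t₁ * c) := Real.exp_pos _
  nlinarith [Real.exp_pos (-((t₂ - t₁) * c)), mul_nonneg (sub_nonneg.mpr h12) hc0]

lemma le_th0_sub {t₁ t₂ : ℝ} (h1 : 0 < t₁) (h12 : t₁ ≤ t₂) :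
    (t₂ - t₁) * th2 t₂ ≤ th0 t₁ - th0 t₂ := by
  have h2 : 0 < t₂ := lt_of_lt_of_le h1 h12
  rw [th0, th0, ← Summable.tsum_sub (summable_th0 h1) (summable_th0 h2), th2, ← tsum_mul_left]
  refine Summable.tsum_le_tsum (fun n => ?_) ((summable_sq_exp_sq h2).mul_left _)
    ((summable_th0 h1).sub (summable_th0 h2))
  set c : ℝ := (n:ℝ) ^ 2 with hc
  have hc0 : 0 ≤ c := sq_nonneg _
  have key : Real.exp (-t₁ * c) = Real.exp (-t₂ * c) * Real.exp ((t₂ - t₁) * c) := by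
    rw [← Real.exp_add]; ring_nf
  rw [key]
  have hx : 1 + (t₂ - t₁) * c ≤ Real.exp ((t₂ - t₁) * c) := by
    have := Real.add_one_le_exp ((t₂ - t₁) * c)
    linarith
  have hexp : 0 < Real.exp (-t₂ * c) := Real.exp_pos _
  nlinarith

/-- slope limit for `x ↦ 1/√(1+x)` at `0`. -/

lemma hasDeriv_inv_sqrt : HasDerivAt (fun x : ℝ => (Real.sqrt (1 + x))⁻¹) (-(1/2)) 0 := by
  have h1 : HasDerivAt (fun x : ℝ => Real.sqrt (1 + x)) (1/2) 0 := by
    have hc : HasDerivAt (fun x : ℝ => 1 + x) 1 0 := by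
      simpa using (hasDerivAt_id (0:ℝ)).const_add (1:ℝ)
    have := hc.sqrt (by norm_num)
    simpa [Real.sqrt_one] using this
  have h2 := h1.inv (by simp)
  simpa [Real.sqrt_one, Pi.inv_def] using h2

lemma tendsto_slope_low :
    Tendsto (fun δ : ℝ => ((Real.sqrt (1 - δ))⁻¹ - 1) / δ) (𝓝[>] (0:ℝ)) (𝓝 (1/2)) := by
  have h := hasDerivAt_iff_tendsto_slope.mp hasDeriv_inv_sqrt
  have hneg : Tendsto (fun δ : ℝ => -δ) (𝓝[>] (0:ℝ)) (𝓝[≠] (0:ℝ)) := by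
    refine tendsto_nhdsWithin_of_tendsto_nhds_of_eventually_within _ ?_ ?_
    · simpa using ((continuous_neg.tendsto (0:ℝ)).mono_left nhdsWithin_le_nhds)
    · filter_upwards [self_mem_nhdsWithin] with δ (hδ : 0 < δ)
      simp [ne_of_lt (neg_neg_of_pos hδ)]
  have h2 := (h.comp hneg).neg
  rw [show -(-(1/2) : ℝ) = 1/2 by norm_num] at h2
  refine h2.congr' ?_
  filter_upwards [self_mem_nhdsWithin] with δ (hδ : 0 < δ)
  have hδ' : δ ≠ 0 := ne_of_gt hδ
  simp only [Function.comp, slope_def_field]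
  rw [show (1:ℝ) + -δ = 1 - δ by ring, show (1:ℝ) + 0 = 1 by norm_num, Real.sqrt_one,
    sub_zero, div_neg, neg_neg, inv_one]

lemma tendsto_slope_high :
    Tendsto (fun δ : ℝ => (1 - (Real.sqrt (1 + δ))⁻¹) / δ) (𝓝[>] (0:ℝ)) (𝓝 (1/2)) := by
  have h := hasDerivAt_iff_tendsto_slope.mp hasDeriv_inv_sqrt
  have hsub : Tendsto (fun δ : ℝ => δ) (𝓝[>] (0:ℝ)) (𝓝[≠] (0:ℝ)) :=
    tendsto_nhdsWithin_mono_right (by intro x hx; exact ne_of_gt hx) tendsto_id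
  have h2 := (h.comp hsub).neg
  rw [show -(-(1/2) : ℝ) = 1/2 by norm_num] at h2
  refine h2.congr' ?_
  filter_upwards [self_mem_nhdsWithin] with δ (hδ : 0 < δ)
  have hδ' : δ ≠ 0 := ne_of_gt hδ
  simp only [Function.comp, slope_def_field]
  rw [show (1:ℝ) + 0 = 1 by norm_num, Real.sqrt_one, sub_zero]
  field_simp
  ring

lemma tendsto_th0_ratio {c : ℝ} (hc : 0 < c) :
    Tendsto (fun t => th0 (t * c) / th0 t) (𝓝[>] (0:ℝ)) (𝓝 ((Real.sqrt c)⁻¹)) := by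
  have hm : Tendsto (fun t : ℝ => t * c) (𝓝[>] (0:ℝ)) (𝓝[>] (0:ℝ)) := by
    refine tendsto_nhdsWithin_of_tendsto_nhds_of_eventually_within _ ?_ ?_
    · have h0 : Tendsto (fun t : ℝ => t * c) (𝓝 (0:ℝ)) (𝓝 ((0:ℝ) * c)) :=
        tendsto_id.mul_const c
      rw [zero_mul] at h0
      exact h0.mono_left nhdsWithin_le_nhds
    · filter_upwards [self_mem_nhdsWithin] with t (ht : 0 < t)
      exact mul_pos ht hc
  have hA := tendsto_sqrt_mul_th0
  have hπ : Real.sqrt π ≠ 0 := (Real.sqrt_pos.mpr Real.pi_pos).ne'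
  have h1 : Tendsto (fun t => (Real.sqrt (t*c) * th0 (t*c)) / (Real.sqrt t * th0 t)
      * (Real.sqrt c)⁻¹) (𝓝[>] (0:ℝ)) (𝓝 ((Real.sqrt c)⁻¹)) := by
    have := ((hA.comp hm).div hA hπ).mul_const (Real.sqrt c)⁻¹
    rw [div_self hπ, one_mul] at this
    exact this
  refine h1.congr' ?_
  filter_upwards [self_mem_nhdsWithin] with t (ht : 0 < t)
  have h0t : 0 < th0 t := th0_pos ht
  have hst : (0:ℝ) < Real.sqrt t := Real.sqrt_pos.mpr ht
  have hsc : (0:ℝ) < Real.sqrt c := Real.sqrt_pos.mpr hc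
  rw [Real.sqrt_mul ht.le]
  field_simp

lemma tendsto_th2_div_th0 :
    Tendsto (fun t => t * th2 t / th0 t) (𝓝[>] (0:ℝ)) (𝓝 (1/2)) := by
  rw [show (1/2 : ℝ) = ((1:ℝ)/2) by norm_num]
  refine tendsto_order.2 ⟨?_, ?_⟩
  · -- lower bounds
    intro c hc
    have hev : ∀ᶠ δ in 𝓝[>] (0:ℝ), c < (1 - (Real.sqrt (1 + δ))⁻¹) / δ :=
      tendsto_slope_high.eventually (eventually_gt_nhds hc)
    obtain ⟨δ, hδB, hδpos⟩ := (hev.and self_mem_nhdsWithin).exists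
    replace hδpos : (0:ℝ) < δ := hδpos
    have hr := tendsto_th0_ratio (c := 1 + δ) (by linarith)
    have hw : Tendsto (fun t => (1 - th0 (t * (1+δ)) / th0 t) / δ) (𝓝[>] (0:ℝ))
        (𝓝 ((1 - (Real.sqrt (1+δ))⁻¹) / δ)) :=
      (tendsto_const_nhds.sub hr).div_const δ
    have hev2 := hw.eventually (eventually_gt_nhds hδB)
    filter_upwards [hev2, self_mem_nhdsWithin] with t h2 (ht : 0 < t)
    refine lt_of_lt_of_le h2 ?_
    have h0t : 0 < th0 t := th0_pos ht
    have key := th0_sub_le (t₁ := t) (t₂ := t * (1+δ)) ht (by nlinarith)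
    rw [show t * (1+δ) - t = t * δ by ring] at key
    have e : (1 - th0 (t * (1+δ)) / th0 t) * th0 t = th0 t - th0 (t * (1+δ)) := by
      field_simp
    rw [div_le_div_iff₀ (by positivity) h0t]
    linarith [e, key]
  · -- upper bounds
    intro c hc
    have hev : ∀ᶠ δ in 𝓝[>] (0:ℝ), ((Real.sqrt (1 - δ))⁻¹ - 1) / δ < c :=
      tendsto_slope_low.eventually (eventually_lt_nhds hc)
    have hio : Set.Ioo (0:ℝ) 1 ∈ 𝓝[>] (0:ℝ) :=
      Ioo_mem_nhdsGT_of_mem (by norm_num : (0:ℝ) ∈ Set.Ico (0:ℝ) 1)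
    obtain ⟨δ, hδB, hδIoo⟩ := (hev.and hio).exists
    obtain ⟨hδpos, hδlt⟩ := hδIoo
    have hr := tendsto_th0_ratio (c := 1 - δ) (by linarith)
    have hw : Tendsto (fun t => (th0 (t * (1-δ)) / th0 t - 1) / δ) (𝓝[>] (0:ℝ))
        (𝓝 (((Real.sqrt (1-δ))⁻¹ - 1) / δ)) :=
      (hr.sub tendsto_const_nhds).div_const δ
    have hev2 := hw.eventually (eventually_lt_nhds hδB)
    filter_upwards [hev2, self_mem_nhdsWithin] with t h2 (ht : 0 < t)
    refine lt_of_le_of_lt ?_ h2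
    have h0t : 0 < th0 t := th0_pos ht
    have key := le_th0_sub (t₁ := t * (1-δ)) (t₂ := t) (by nlinarith) (by nlinarith)
    rw [show t - t * (1-δ) = t * δ by ring] at key
    have e : (th0 (t * (1-δ)) / th0 t - 1) * th0 t = th0 (t * (1-δ)) - th0 t := by
      field_simp
    rw [div_le_div_iff₀ h0t (by positivity)]
    linarith [e, key]

lemma thh_pos {t : ℝ} (ht : 0 < t) : 0 < thh t :=
  Summable.tsum_pos (summable_exp_sq ht (1/2)) (fun n => (Real.exp_pos _).le) 0 (Real.exp_pos _)

lemma th2_pos {t : ℝ} (ht : 0 < t) : 0 < th2 t := by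
  refine Summable.tsum_pos (summable_sq_exp_sq ht) (fun n => by positivity) 1 ?_
  norm_num
  exact Real.exp_pos _

def bb (j : ℕ) (a : ℝ) (k : ℤ) : ℝ :=
  Real.sqrt (1 - Real.exp (-(2 * ((k:ℝ) ^ 2 + a ^ 2) / ((j:ℝ) * ((j:ℝ) + 1) * a)))) *
    Real.exp (-(((k:ℝ) ^ 2 + a ^ 2) / (((j:ℝ) + 1) * a)))

def Sa (j : ℕ) (a : ℝ) : ℝ := ∑' k : ℤ, bb j a k ^ 2

def Ta (j : ℕ) (a : ℝ) : ℝ := ∑' k : ℤ, bb j a k * bb j a (k + 1)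

def Ma (j : ℕ) (a : ℝ) : ℝ := ∑' k : ℤ, (k : ℝ) ^ 2 * bb j a k ^ 2

lemma bb_nonneg (j : ℕ) (a : ℝ) (k : ℤ) : 0 ≤ bb j a k := by
  unfold bb; positivity

lemma phase_re (j : ℕ) (z : ℂ) (hz : z.re = 0) : ‖Complex.exp z‖ = 1 := by
  rw [Complex.norm_exp, hz, Real.exp_zero]

lemma etaHat_eq (j : ℕ) (a : ℝ) (k : ℤ) : etaHat j a k =
    Complex.exp (2 * (Real.pi:ℂ) * Complex.I * (((2:ℝ) ^ (-(j:ℝ) - 1) : ℝ) : ℂ) * (k:ℂ)) *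
    ((bb j a k : ℝ) : ℂ) := rfl

lemma norm_etaHat (j : ℕ) (a : ℝ) (k : ℤ) : ‖etaHat j a k‖ = bb j a k := by
  rw [etaHat_eq, norm_mul]
  have h1 : (2 * (Real.pi:ℂ) * Complex.I * (((2:ℝ) ^ (-(j:ℝ) - 1) : ℝ) : ℂ) * (k:ℂ)).re = 0 := by
    simp [Complex.mul_re, Complex.mul_im]
  rw [phase_re j _ h1, one_mul, Complex.norm_real, Real.norm_eq_abs]
  exact abs_of_nonneg (bb_nonneg j a k)

lemma bb_neg (j : ℕ) (a : ℝ) (k : ℤ) : bb j a (-k) = bb j a k := by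
  unfold bb; push_cast; rw [neg_pow]; norm_num

lemma tsum_odd_bb (j : ℕ) (a : ℝ) : ∑' k : ℤ, (k : ℝ) * bb j a k ^ 2 = 0 := by
  have h := (Equiv.neg ℤ).tsum_eq (f := fun k : ℤ => (k : ℝ) * bb j a k ^ 2)
  have h2 : ∀ k : ℤ, ((Equiv.neg ℤ) k : ℝ) * bb j a ((Equiv.neg ℤ) k) ^ 2
      = -((k : ℝ) * bb j a k ^ 2) := by
    intro k
    simp only [Equiv.neg_apply]
    rw [bb_neg]
    push_cast
    ring
  rw [tsum_congr h2, tsum_neg] at h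
  linarith

/-- the phase constant -/

lemma trigSum_etaHat (j : ℕ) (a : ℝ) : ‖trigSum (etaHat j a)‖ = Ta j a := by
  set θ : ℂ := (((2:ℝ) ^ (-(j:ℝ) - 1) : ℝ) : ℂ) with hθ
  have hterm : ∀ k : ℤ, etaHat j a k * (starRingEnd ℂ) (etaHat j a (k+1)) =
      Complex.exp (-(2 * (Real.pi:ℂ) * Complex.I * θ)) * ((bb j a k * bb j a (k+1) : ℝ) : ℂ) := by
    intro k
    rw [etaHat_eq, etaHat_eq, map_mul, ← Complex.exp_conj, Complex.conj_ofReal]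
    have hconj : (starRingEnd ℂ) (2 * (Real.pi:ℂ) * Complex.I * θ * ((k+1 : ℤ):ℂ)) =
        -(2 * (Real.pi:ℂ) * Complex.I * θ * ((k+1 : ℤ):ℂ)) := by
      rw [hθ]
      simp only [map_mul, Complex.conj_I, Complex.conj_ofReal, map_ofNat, map_intCast]
      ring
    rw [hconj]
    rw [show Complex.exp (2 * (Real.pi:ℂ) * Complex.I * θ * (k:ℂ)) *
        ((bb j a k : ℝ):ℂ) * (Complex.exp (-(2 * (Real.pi:ℂ) * Complex.I * θ * ((k+1:ℤ):ℂ))) *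
        ((bb j a (k+1) : ℝ):ℂ)) =
        (Complex.exp (2 * (Real.pi:ℂ) * Complex.I * θ * (k:ℂ)) *
        Complex.exp (-(2 * (Real.pi:ℂ) * Complex.I * θ * ((k+1:ℤ):ℂ)))) *
        (((bb j a k : ℝ):ℂ) * ((bb j a (k+1) : ℝ):ℂ)) by ring]
    rw [← Complex.exp_add, ← Complex.ofReal_mul]
    congr 1
    · congr 1
      push_cast
      ring
  rw [trigSum, tsum_congr hterm, tsum_mul_left, ← Complex.ofReal_tsum, norm_mul]
  rw [phase_re j _ (by simp [hθ, Complex.mul_re, Complex.mul_im])]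
  rw [one_mul, Complex.norm_real, Real.norm_eq_abs, abs_of_nonneg]
  · rfl
  · exact tsum_nonneg fun k => mul_nonneg (bb_nonneg j a k) (bb_nonneg j a _)

lemma prod_eq (j : ℕ) (a : ℝ) (hS : Sa j a ≠ 0) (hT : Ta j a ≠ 0) :
    varA (etaHat j a) * varF (etaHat j a) = ((Sa j a / Ta j a) ^ 2 - 1) * (Ma j a / Sa j a) := by
  have hπ : Real.pi ≠ 0 := Real.pi_ne_zero
  have h1 : ∀ k : ℤ, ‖etaHat j a k‖ ^ 2 = bb j a k ^ 2 := fun k => by rw [norm_etaHat]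
  have h2 : ∀ k : ℤ, (k:ℝ) ^ 2 * ‖etaHat j a k‖ ^ 2 = (k:ℝ) ^ 2 * bb j a k ^ 2 :=
    fun k => by rw [norm_etaHat]
  have h3 : ∀ k : ℤ, (k:ℝ) * ‖etaHat j a k‖ ^ 2 = (k:ℝ) * bb j a k ^ 2 :=
    fun k => by rw [norm_etaHat]
  rw [varA, varF, tsum_congr h1, tsum_congr h2, tsum_congr h3, trigSum_etaHat,
    tsum_odd_bb]
  rw [show (∑' k : ℤ, bb j a k ^ 2) = Sa j a from rfl,
    show (∑' k : ℤ, (k:ℝ) ^ 2 * bb j a k ^ 2) = Ma j a from rfl]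
  rw [div_pow]
  field_simp
  ring

def Pp (j : ℕ) (a : ℝ) : ℝ := 2 / (((j:ℝ) + 1) * a)

def epsl (j : ℕ) (a : ℝ) : ℝ := Real.exp (-(2 * a / ((j:ℝ) * ((j:ℝ) + 1))))

def Cc (j : ℕ) (a : ℝ) : ℝ := Real.exp (-(Pp j a * a ^ 2))

variable {j : ℕ} {a : ℝ}

lemma J1 (hj : 1 ≤ j) : (1:ℝ) ≤ (j:ℝ) := by exact_mod_cast hj

lemma Pp_pos {j : ℕ} {a : ℝ} (hj : 1 ≤ j) (ha : 0 < a) : 0 < Pp j a := by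
  have := J1 (j := j) hj
  unfold Pp; positivity

lemma epsl_lt_one {j : ℕ} {a : ℝ} (hj : 1 ≤ j) (ha : 0 < a) : epsl j a < 1 := by
  have hJ := J1 (j := j) hj
  rw [epsl, Real.exp_lt_one_iff, neg_lt_zero]
  positivity

lemma epsl_pos {j : ℕ} {a : ℝ} : 0 < epsl j a := Real.exp_pos _

lemma Cc_pos {j : ℕ} {a : ℝ} : 0 < Cc j a := Real.exp_pos _

/-- `bb² = G·(1 - E)` decomposition: upper bound. -/

lemma bb_sq_le {j : ℕ} {a : ℝ} (hj : 1 ≤ j) (ha : 0 < a) (k : ℤ) :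
    bb j a k ^ 2 ≤ Cc j a * Real.exp (-Pp j a * (k:ℝ) ^ 2) := by
  have hJ := J1 (j := j) hj
  have h1 : (0:ℝ) ≤ 1 - Real.exp (-(2 * ((k:ℝ) ^ 2 + a ^ 2) / ((j:ℝ) * ((j:ℝ) + 1) * a))) := by
    have : Real.exp (-(2 * ((k:ℝ) ^ 2 + a ^ 2) / ((j:ℝ) * ((j:ℝ) + 1) * a))) ≤ 1 := by
      rw [Real.exp_le_one_iff, neg_nonpos]
      positivity
    linarith
  rw [bb, mul_pow, Real.sq_sqrt h1, ← Real.exp_nat_mul, Cc, ← Real.exp_add]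
  have harg : ((2:ℕ):ℝ) * -(((k:ℝ) ^ 2 + a ^ 2) / (((j:ℝ) + 1) * a))
      = -(Pp j a * a ^ 2) + -Pp j a * (k:ℝ) ^ 2 := by
    rw [Pp]
    have hne : ((j:ℝ) + 1) * a ≠ 0 := by positivity
    field_simp
    ring
  rw [harg]
  nlinarith [Real.exp_pos (-(Pp j a * a ^ 2) + -Pp j a * (k:ℝ) ^ 2),
    Real.exp_pos (-(2 * ((k:ℝ) ^ 2 + a ^ 2) / ((j:ℝ) * ((j:ℝ) + 1) * a)))]

/-- lower bound. -/

lemma le_bb_sq {j : ℕ} {a : ℝ} (hj : 1 ≤ j) (ha : 0 < a) (k : ℤ) :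
    (1 - epsl j a) * (Cc j a * Real.exp (-Pp j a * (k:ℝ) ^ 2)) ≤ bb j a k ^ 2 := by
  have hJ := J1 (j := j) hj
  have h1 : (0:ℝ) ≤ 1 - Real.exp (-(2 * ((k:ℝ) ^ 2 + a ^ 2) / ((j:ℝ) * ((j:ℝ) + 1) * a))) := by
    have : Real.exp (-(2 * ((k:ℝ) ^ 2 + a ^ 2) / ((j:ℝ) * ((j:ℝ) + 1) * a))) ≤ 1 := by
      rw [Real.exp_le_one_iff, neg_nonpos]; positivity
    linarith
  rw [bb, mul_pow, Real.sq_sqrt h1, ← Real.exp_nat_mul, Cc, ← Real.exp_add]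
  have harg : ((2:ℕ):ℝ) * -(((k:ℝ) ^ 2 + a ^ 2) / (((j:ℝ) + 1) * a))
      = -(Pp j a * a ^ 2) + -Pp j a * (k:ℝ) ^ 2 := by
    rw [Pp]
    have hne : ((j:ℝ) + 1) * a ≠ 0 := by positivity
    field_simp
    ring
  rw [harg]
  have hE : Real.exp (-(2 * ((k:ℝ) ^ 2 + a ^ 2) / ((j:ℝ) * ((j:ℝ) + 1) * a))) ≤ epsl j a := by
    rw [epsl, Real.exp_le_exp, neg_le_neg_iff]
    rw [div_le_div_iff₀ (by positivity) (by positivity)]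
    nlinarith [mul_nonneg (mul_nonneg (by linarith : (0:ℝ) ≤ (j:ℝ))
      (by linarith : (0:ℝ) ≤ (j:ℝ) + 1)) (sq_nonneg (k:ℝ))]
  nlinarith [Real.exp_pos (-(Pp j a * a ^ 2) + -Pp j a * (k:ℝ) ^ 2)]

lemma bb_le {j : ℕ} {a : ℝ} (hj : 1 ≤ j) (ha : 0 < a) (k : ℤ) :
    bb j a k ≤ Real.sqrt (Cc j a * Real.exp (-Pp j a * (k:ℝ) ^ 2)) := by
  have h := bb_sq_le (j := j) (a := a) hj ha k
  have := Real.sqrt_le_sqrt h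
  rwa [Real.sqrt_sq (bb_nonneg j a k)] at this

lemma le_bb {j : ℕ} {a : ℝ} (hj : 1 ≤ j) (ha : 0 < a) (k : ℤ) :
    Real.sqrt ((1 - epsl j a) * (Cc j a * Real.exp (-Pp j a * (k:ℝ) ^ 2))) ≤ bb j a k := by
  have h := le_bb_sq (j := j) (a := a) hj ha k
  have := Real.sqrt_le_sqrt h
  rwa [Real.sqrt_sq (bb_nonneg j a k)] at this

lemma sqrt_prod_eq {j : ℕ} {a : ℝ} (hj : 1 ≤ j) (ha : 0 < a) (k : ℤ) :
    Real.sqrt (Cc j a * Real.exp (-Pp j a * (k:ℝ) ^ 2)) *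
      Real.sqrt (Cc j a * Real.exp (-Pp j a * ((k:ℝ)+1) ^ 2)) =
      Cc j a * Real.exp (-Pp j a / 4) * Real.exp (-Pp j a * ((k:ℝ) + 1/2) ^ 2) := by
  rw [← Real.sqrt_mul (mul_pos (Cc_pos (j := j) (a := a)) (Real.exp_pos _)).le]
  rw [show Cc j a * Real.exp (-Pp j a * (k:ℝ) ^ 2) * (Cc j a * Real.exp (-Pp j a * ((k:ℝ)+1) ^ 2))
      = (Cc j a * Real.exp (-Pp j a / 4) * Real.exp (-Pp j a * ((k:ℝ) + 1/2) ^ 2)) ^ 2 by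
    simp only [Cc, mul_pow, ← Real.exp_nat_mul, ← Real.exp_add]
    congr 1
    push_cast
    ring]
  exact Real.sqrt_sq
    (mul_pos (mul_pos (Cc_pos (j := j) (a := a)) (Real.exp_pos _)) (Real.exp_pos _)).le

/-- upper bound for products of consecutive `bb`s. -/

lemma bb_prod_le {j : ℕ} {a : ℝ} (hj : 1 ≤ j) (ha : 0 < a) (k : ℤ) :
    bb j a k * bb j a (k+1) ≤
      Cc j a * Real.exp (-Pp j a / 4) * Real.exp (-Pp j a * ((k:ℝ) + 1/2) ^ 2) := by
  have h1 := bb_le (j := j) (a := a) hj ha k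
  have h2 := bb_le (j := j) (a := a) hj ha (k+1)
  have h3 := mul_le_mul h1 h2 (bb_nonneg j a (k+1)) (Real.sqrt_nonneg _)
  refine h3.trans (le_of_eq ?_)
  rw [show (((k+1 : ℤ)):ℝ) = (k:ℝ) + 1 by push_cast; ring]
  exact sqrt_prod_eq hj ha k

/-- lower bound for products of consecutive `bb`s. -/

lemma le_bb_prod {j : ℕ} {a : ℝ} (hj : 1 ≤ j) (ha : 0 < a) (k : ℤ) :
    (1 - epsl j a) * (Cc j a * Real.exp (-Pp j a / 4) *
      Real.exp (-Pp j a * ((k:ℝ) + 1/2) ^ 2)) ≤ bb j a k * bb j a (k+1) := by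
  have hε1 : 0 ≤ 1 - epsl j a := by
    have := epsl_lt_one (j := j) (a := a) hj ha; linarith
  have h1 := le_bb (j := j) (a := a) hj ha k
  have h2 := le_bb (j := j) (a := a) hj ha (k+1)
  have h3 := mul_le_mul h1 h2 (Real.sqrt_nonneg _) (bb_nonneg j a k)
  refine le_trans (le_of_eq ?_) h3
  rw [Real.sqrt_mul hε1, Real.sqrt_mul hε1, show (((k+1 : ℤ)):ℝ) = (k:ℝ) + 1 by push_cast; ring]
  rw [show Real.sqrt (1 - epsl j a) * Real.sqrt (Cc j a * Real.exp (-Pp j a * (k:ℝ) ^ 2)) *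
      (Real.sqrt (1 - epsl j a) * Real.sqrt (Cc j a * Real.exp (-Pp j a * ((k:ℝ)+1) ^ 2)))
      = (Real.sqrt (1 - epsl j a) * Real.sqrt (1 - epsl j a)) *
        (Real.sqrt (Cc j a * Real.exp (-Pp j a * (k:ℝ) ^ 2)) *
         Real.sqrt (Cc j a * Real.exp (-Pp j a * ((k:ℝ)+1) ^ 2))) by ring]
  rw [Real.mul_self_sqrt hε1, sqrt_prod_eq hj ha k]

/-- summability of the three series -/

lemma summable_bb_sq {j : ℕ} {a : ℝ} (hj : 1 ≤ j) (ha : 0 < a) : Summable fun k : ℤ => bb j a k ^ 2 := by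
  refine Summable.of_nonneg_of_le (fun k => by positivity) (bb_sq_le hj ha)
    (((summable_exp_sq (Pp_pos hj ha) 0).congr (by intro n; rw [add_zero])).mul_left (Cc j a))

lemma summable_sq_bb_sq {j : ℕ} {a : ℝ} (hj : 1 ≤ j) (ha : 0 < a) :
    Summable fun k : ℤ => (k:ℝ) ^ 2 * bb j a k ^ 2 := by
  refine Summable.of_nonneg_of_le (fun k => by positivity) (fun k => ?_)
    (((summable_sq_exp_sq (Pp_pos hj ha))).mul_left (Cc j a))
  calc (k:ℝ) ^ 2 * bb j a k ^ 2 ≤ (k:ℝ) ^ 2 * (Cc j a * Real.exp (-Pp j a * (k:ℝ) ^ 2)) := by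
        exact mul_le_mul_of_nonneg_left (bb_sq_le hj ha k) (sq_nonneg _)
    _ = Cc j a * ((k:ℝ) ^ 2 * Real.exp (-Pp j a * (k:ℝ) ^ 2)) := by ring

lemma summable_bb_prod {j : ℕ} {a : ℝ} (hj : 1 ≤ j) (ha : 0 < a) :
    Summable fun k : ℤ => bb j a k * bb j a (k+1) := by
  refine Summable.of_nonneg_of_le (fun k => mul_nonneg (bb_nonneg j a k) (bb_nonneg j a _))
    (bb_prod_le hj ha)
    (((summable_exp_sq (Pp_pos hj ha) (1/2))).mul_left (Cc j a * Real.exp (-Pp j a / 4)))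

/-- sum bounds -/

lemma Sa_le {j : ℕ} {a : ℝ} (hj : 1 ≤ j) (ha : 0 < a) : Sa j a ≤ Cc j a * th0 (Pp j a) := by
  rw [Sa, th0, ← tsum_mul_left]
  exact Summable.tsum_le_tsum (bb_sq_le hj ha) (summable_bb_sq hj ha)
    (((summable_exp_sq (Pp_pos hj ha) 0).congr (by intro n; rw [add_zero])).mul_left (Cc j a))

lemma le_Sa {j : ℕ} {a : ℝ} (hj : 1 ≤ j) (ha : 0 < a) :
    (1 - epsl j a) * (Cc j a * th0 (Pp j a)) ≤ Sa j a := by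
  rw [Sa, th0, ← tsum_mul_left, ← tsum_mul_left]
  refine Summable.tsum_le_tsum (le_bb_sq hj ha) ?_ (summable_bb_sq hj ha)
  exact ((((summable_exp_sq (Pp_pos hj ha) 0).congr (by intro n; rw [add_zero])).mul_left
    (Cc j a)).mul_left _)

lemma Ma_le {j : ℕ} {a : ℝ} (hj : 1 ≤ j) (ha : 0 < a) : Ma j a ≤ Cc j a * th2 (Pp j a) := by
  rw [Ma, th2, ← tsum_mul_left]
  refine Summable.tsum_le_tsum (fun k => ?_) (summable_sq_bb_sq hj ha)
    ((summable_sq_exp_sq (Pp_pos hj ha)).mul_left (Cc j a))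
  calc (k:ℝ) ^ 2 * bb j a k ^ 2 ≤ (k:ℝ) ^ 2 * (Cc j a * Real.exp (-Pp j a * (k:ℝ) ^ 2)) :=
        mul_le_mul_of_nonneg_left (bb_sq_le hj ha k) (sq_nonneg _)
    _ = Cc j a * ((k:ℝ) ^ 2 * Real.exp (-Pp j a * (k:ℝ) ^ 2)) := by ring

lemma le_Ma {j : ℕ} {a : ℝ} (hj : 1 ≤ j) (ha : 0 < a) :
    (1 - epsl j a) * (Cc j a * th2 (Pp j a)) ≤ Ma j a := by
  rw [Ma, th2, ← tsum_mul_left, ← tsum_mul_left]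
  refine Summable.tsum_le_tsum (fun k => ?_) ?_ (summable_sq_bb_sq hj ha)
  · calc (1 - epsl j a) * (Cc j a * ((k:ℝ) ^ 2 * Real.exp (-Pp j a * (k:ℝ) ^ 2)))
        = (k:ℝ) ^ 2 * ((1 - epsl j a) * (Cc j a * Real.exp (-Pp j a * (k:ℝ) ^ 2))) := by ring
    _ ≤ (k:ℝ) ^ 2 * bb j a k ^ 2 :=
        mul_le_mul_of_nonneg_left (le_bb_sq hj ha k) (sq_nonneg _)
  · exact (((summable_sq_exp_sq (Pp_pos hj ha)).mul_left (Cc j a)).mul_left _)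

lemma Ta_le {j : ℕ} {a : ℝ} (hj : 1 ≤ j) (ha : 0 < a) :
    Ta j a ≤ Cc j a * Real.exp (-Pp j a / 4) * thh (Pp j a) := by
  rw [Ta, thh, ← tsum_mul_left]
  exact Summable.tsum_le_tsum (bb_prod_le hj ha) (summable_bb_prod hj ha)
    ((summable_exp_sq (Pp_pos hj ha) (1/2)).mul_left _)

lemma le_Ta {j : ℕ} {a : ℝ} (hj : 1 ≤ j) (ha : 0 < a) :
    (1 - epsl j a) * (Cc j a * Real.exp (-Pp j a / 4) * thh (Pp j a)) ≤ Ta j a := by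
  rw [Ta, thh, ← tsum_mul_left, ← tsum_mul_left]
  exact Summable.tsum_le_tsum (le_bb_prod hj ha)
    (((summable_exp_sq (Pp_pos hj ha) (1/2)).mul_left _).mul_left _) (summable_bb_prod hj ha)

lemma limP {j : ℕ} (hj : 1 ≤ j) : Tendsto (Pp j) atTop (𝓝[>] (0:ℝ)) := by
  have hJ := J1 hj
  refine tendsto_nhdsWithin_of_tendsto_nhds_of_eventually_within _ ?_ ?_
  · have h : Tendsto (fun a : ℝ => (2 / ((j:ℝ) + 1)) * a⁻¹) atTop (𝓝 ((2 / ((j:ℝ) + 1)) * 0)) :=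
      tendsto_inv_atTop_zero.const_mul _
    rw [mul_zero] at h
    refine h.congr fun a => ?_
    rw [Pp, div_eq_mul_inv, div_eq_mul_inv, mul_inv, mul_assoc]
  · filter_upwards [eventually_gt_atTop (0:ℝ)] with a ha
    exact Pp_pos hj ha

lemma limeps {j : ℕ} (hj : 1 ≤ j) : Tendsto (fun a => epsl j a) atTop (𝓝 0) := by
  have hJ := J1 hj
  have hc : (0:ℝ) < 2 / ((j:ℝ) * ((j:ℝ) + 1)) := by positivity
  have h1 : Tendsto (fun a : ℝ => 2 / ((j:ℝ) * ((j:ℝ) + 1)) * a) atTop atTop :=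
    tendsto_id.const_mul_atTop hc
  have h2 : Tendsto (fun a : ℝ => -(2 / ((j:ℝ) * ((j:ℝ) + 1)) * a)) atTop atBot :=
    tendsto_neg_atTop_atBot.comp h1
  have h3 := Real.tendsto_exp_atBot.comp h2
  refine h3.congr fun a => ?_
  simp only [Function.comp]
  rw [epsl]
  congr 1
  ring

lemma limeps_div {j : ℕ} (hj : 1 ≤ j) :
    Tendsto (fun a => epsl j a / Pp j a) atTop (𝓝 0) := by
  have hJ := J1 hj
  set c : ℝ := 2 / ((j:ℝ) * ((j:ℝ) + 1)) with hc
  have hc0 : 0 < c := by rw [hc]; positivity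
  have h1 : Tendsto (fun a : ℝ => c * a) atTop atTop := tendsto_id.const_mul_atTop hc0
  have h2 := (tendsto_pow_mul_exp_neg_atTop_nhds_zero 1).comp h1
  have h3 := h2.const_mul (((j:ℝ) + 1) / (2 * c))
  rw [mul_zero] at h3
  refine h3.congr' ?_
  filter_upwards [eventually_gt_atTop (0:ℝ)] with a ha
  simp only [Function.comp, pow_one]
  rw [epsl, Pp, div_div_eq_mul_div]
  have hane : a ≠ 0 := ne_of_gt ha
  have hcne : c ≠ 0 := ne_of_gt hc0
  have hJne : (j:ℝ) * ((j:ℝ) + 1) ≠ 0 := by positivity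
  rw [show -(2 * a / ((j:ℝ) * ((j:ℝ) + 1))) = -(c * a) by rw [hc]; ring]
  field_simp

lemma hexp_slope :
    Tendsto (fun t : ℝ => (Real.exp (t/4) - 1) / t) (𝓝[>] (0:ℝ)) (𝓝 (1/4)) := by
  have hd : HasDerivAt (fun t : ℝ => Real.exp (t/4)) (1/4) 0 := by
    have h1 : HasDerivAt (fun t : ℝ => t/4) (1/4) 0 := (hasDerivAt_id (0:ℝ)).div_const 4
    have := h1.exp
    simpa using this
  have h := hasDerivAt_iff_tendsto_slope.mp hd
  have hsub : Tendsto (fun t : ℝ => t) (𝓝[>] (0:ℝ)) (𝓝[≠] (0:ℝ)) :=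
    tendsto_nhdsWithin_mono_right (by intro x hx; exact ne_of_gt hx) tendsto_id
  have h2 := h.comp hsub
  refine h2.congr' ?_
  filter_upwards [self_mem_nhdsWithin] with t (ht : 0 < t)
  simp only [Function.comp, slope_def_field]
  norm_num

/-- the pure-theta comparison quantity. -/

def Yf (j : ℕ) (a : ℝ) : ℝ := Real.exp (Pp j a / 4) * (th0 (Pp j a) / thh (Pp j a))

lemma hY1 {j : ℕ} (hj : 1 ≤ j) : Tendsto (fun a => (Yf j a - 1) / Pp j a) atTop (𝓝 (1/4)) := by
  have hA : Tendsto (fun a => Real.exp (Pp j a / 4)) atTop (𝓝 1) := by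
    have : Tendsto (fun t : ℝ => Real.exp (t/4)) (𝓝[>] (0:ℝ)) (𝓝 1) := by
      have h := ((Real.continuous_exp.comp (continuous_id.div_const 4)).tendsto 0).mono_left
        (nhdsWithin_le_nhds (s := Set.Ioi (0:ℝ)))
      simpa [Function.comp_def] using h
    exact this.comp (limP hj)
  have hB : Tendsto (fun a => (th0 (Pp j a) / thh (Pp j a) - 1) / Pp j a) atTop (𝓝 0) :=
    tendsto_ratio_th0_thh.comp (limP hj)
  have hC : Tendsto (fun a => (Real.exp (Pp j a / 4) - 1) / Pp j a) atTop (𝓝 (1/4)) :=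
    hexp_slope.comp (limP hj)
  have h := (hA.mul hB).add hC
  rw [mul_zero, zero_add] at h
  refine h.congr fun a => ?_
  rw [Yf]
  ring

lemma limP0 {j : ℕ} (hj : 1 ≤ j) : Tendsto (Pp j) atTop (𝓝 0) :=
  (limP hj).mono_right nhdsWithin_le_nhds

lemma hY {j : ℕ} (hj : 1 ≤ j) : Tendsto (Yf j) atTop (𝓝 1) := by
  have h := ((hY1 hj).mul (limP0 hj)).const_add 1
  rw [mul_zero, add_zero] at h
  refine h.congr' ?_
  filter_upwards [eventually_gt_atTop (0:ℝ)] with a ha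
  have hP := (Pp_pos hj ha).ne'
  field_simp
  ring

lemma hYY {j : ℕ} (hj : 1 ≤ j) : Tendsto (fun a => (Yf j a ^ 2 - 1) / Pp j a) atTop (𝓝 (1/2)) := by
  have h := (hY1 hj).mul ((hY hj).const_add 1)
  rw [show (1/4 : ℝ) * (1 + 1) = 1/2 by norm_num] at h
  refine h.congr fun a => ?_
  ring

lemma h1eps {j : ℕ} (hj : 1 ≤ j) : Tendsto (fun a => 1 - epsl j a) atTop (𝓝 1) := by
  have h := (limeps hj).const_sub 1
  rwa [sub_zero] at h

lemma hlow_t {j : ℕ} (hj : 1 ≤ j) :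
    Tendsto (fun a => (((1 - epsl j a) * Yf j a) ^ 2 - 1) / Pp j a) atTop (𝓝 (1/2)) := by
  have h1 := ((h1eps hj).pow 2).mul (hYY hj)
  have h2 := (limeps_div hj).mul ((limeps hj).sub_const 2)
  rw [zero_mul] at h2
  have h := h1.add h2
  rw [one_pow, one_mul, add_zero] at h
  refine h.congr fun a => ?_
  ring

lemma hup_t {j : ℕ} (hj : 1 ≤ j) :
    Tendsto (fun a => ((Yf j a / (1 - epsl j a)) ^ 2 - 1) / Pp j a) atTop (𝓝 (1/2)) := by
  have hz : Tendsto (fun a => ((1 - epsl j a)⁻¹) ^ 2) atTop (𝓝 1) := by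
    have := ((h1eps hj).inv₀ one_ne_zero).pow 2
    simpa using this
  have h1 := hz.mul (hYY hj)
  have h2 : Tendsto (fun a => epsl j a / Pp j a * ((2 - epsl j a) / (1 - epsl j a) ^ 2))
      atTop (𝓝 0) := by
    have hden : Tendsto (fun a => (2 - epsl j a) / (1 - epsl j a) ^ 2) atTop (𝓝 2) := by
      have h3 := ((limeps hj).const_sub 2).div (((h1eps hj)).pow 2) (by norm_num)
      rw [sub_zero, one_pow, div_one] at h3; exact h3
    have := (limeps_div hj).mul hden
    rwa [zero_mul] at this
  have h := h1.add h2
  rw [one_mul, add_zero] at h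
  refine h.congr' ?_
  filter_upwards [eventually_gt_atTop (0:ℝ)] with a ha
  have hε : 1 - epsl j a ≠ 0 := by
    have := epsl_lt_one hj ha; linarith
  field_simp
  ring

lemma Sa_pos {j : ℕ} (hj : 1 ≤ j) {a : ℝ} (ha : 0 < a) : 0 < Sa j a := by
  refine lt_of_lt_of_le ?_ (le_Sa hj ha)
  have h1 := epsl_lt_one (j := j) (a := a) hj ha
  have h2 := th0_pos (Pp_pos hj ha)
  have h3 := Cc_pos (j := j) (a := a)
  exact mul_pos (by linarith) (mul_pos h3 h2)

lemma Ta_pos {j : ℕ} (hj : 1 ≤ j) {a : ℝ} (ha : 0 < a) : 0 < Ta j a := by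
  refine lt_of_lt_of_le ?_ (le_Ta hj ha)
  have h1 := epsl_lt_one (j := j) (a := a) hj ha
  have h2 := thh_pos (Pp_pos hj ha)
  have h3 := Cc_pos (j := j) (a := a)
  have h4 := Real.exp_pos (-Pp j a / 4)
  exact mul_pos (by linarith) (mul_pos (mul_pos h3 h4) h2)

lemma Yf_nonneg {j : ℕ} (hj : 1 ≤ j) {a : ℝ} (ha : 0 < a) : 0 ≤ Yf j a := by
  have h1 := th0_pos (Pp_pos hj ha)
  have h2 := thh_pos (Pp_pos hj ha)
  rw [Yf]
  positivity

lemma hx_lo {j : ℕ} (hj : 1 ≤ j) {a : ℝ} (ha : 0 < a) :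
    (1 - epsl j a) * Yf j a ≤ Sa j a / Ta j a := by
  have hε1 : 0 ≤ 1 - epsl j a := by have := epsl_lt_one hj ha; linarith
  have h0 := th0_pos (Pp_pos hj ha)
  have hh := thh_pos (Pp_pos hj ha)
  have hC := Cc_pos (j := j) (a := a)
  have hTpos := Ta_pos hj ha
  have h1 : ((1 - epsl j a) * (Cc j a * th0 (Pp j a))) /
      (Cc j a * Real.exp (-Pp j a / 4) * thh (Pp j a)) ≤ Sa j a / Ta j a :=
    div_le_div₀ (Sa_pos hj ha).le (le_Sa hj ha) hTpos (Ta_le hj ha)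
  refine le_trans (le_of_eq ?_) h1
  rw [show Real.exp (-Pp j a / 4) = (Real.exp (Pp j a / 4))⁻¹ by rw [neg_div, Real.exp_neg]]
  have hene : Real.exp (Pp j a / 4) ≠ 0 := (Real.exp_pos _).ne'
  rw [Yf]
  field_simp

lemma hx_up {j : ℕ} (hj : 1 ≤ j) {a : ℝ} (ha : 0 < a) :
    Sa j a / Ta j a ≤ Yf j a / (1 - epsl j a) := by
  have hε1 : 0 < 1 - epsl j a := by have := epsl_lt_one hj ha; linarith
  have h0 := th0_pos (Pp_pos hj ha)
  have hh := thh_pos (Pp_pos hj ha)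
  have hC := Cc_pos (j := j) (a := a)
  have h1 : Sa j a / Ta j a ≤ (Cc j a * th0 (Pp j a)) /
      ((1 - epsl j a) * (Cc j a * Real.exp (-Pp j a / 4) * thh (Pp j a))) :=
    div_le_div₀ (by positivity) (Sa_le hj ha)
      (by positivity) (le_Ta hj ha)
  refine h1.trans (le_of_eq ?_)
  rw [show Real.exp (-Pp j a / 4) = (Real.exp (Pp j a / 4))⁻¹ by rw [neg_div, Real.exp_neg]]
  have hene : Real.exp (Pp j a / 4) ≠ 0 := (Real.exp_pos _).ne'
  rw [Yf]
  field_simp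

lemma hF2 {j : ℕ} (hj : 1 ≤ j) :
    Tendsto (fun a => ((Sa j a / Ta j a) ^ 2 - 1) / Pp j a) atTop (𝓝 (1/2)) := by
  refine tendsto_of_tendsto_of_tendsto_of_le_of_le' (hlow_t hj) (hup_t hj) ?_ ?_
  · filter_upwards [eventually_gt_atTop (0:ℝ)] with a ha
    have hP := Pp_pos hj ha
    have hε1 : 0 ≤ 1 - epsl j a := by have := epsl_lt_one hj ha; linarith
    have h1 : ((1 - epsl j a) * Yf j a) ^ 2 ≤ (Sa j a / Ta j a) ^ 2 :=
      pow_le_pow_left₀ (mul_nonneg hε1 (Yf_nonneg hj ha)) (hx_lo hj ha) 2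
    have := sub_le_sub_right h1 1
    exact div_le_div_of_nonneg_right this hP.le
  · filter_upwards [eventually_gt_atTop (0:ℝ)] with a ha
    have hP := Pp_pos hj ha
    have hε1 : 0 ≤ 1 - epsl j a := by have := epsl_lt_one hj ha; linarith
    have hx0 : 0 ≤ Sa j a / Ta j a := div_nonneg (Sa_pos hj ha).le (Ta_pos hj ha).le
    have h1 : (Sa j a / Ta j a) ^ 2 ≤ (Yf j a / (1 - epsl j a)) ^ 2 :=
      pow_le_pow_left₀ hx0 (hx_up hj ha) 2
    have := sub_le_sub_right h1 1
    exact div_le_div_of_nonneg_right this hP.le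

lemma hmidM {j : ℕ} (hj : 1 ≤ j) :
    Tendsto (fun a => Pp j a * th2 (Pp j a) / th0 (Pp j a)) atTop (𝓝 (1/2)) :=
  tendsto_th2_div_th0.comp (limP hj)

lemma hF1 {j : ℕ} (hj : 1 ≤ j) :
    Tendsto (fun a => Pp j a * (Ma j a / Sa j a)) atTop (𝓝 (1/2)) := by
  have hlo : Tendsto (fun a => (1 - epsl j a) * (Pp j a * th2 (Pp j a) / th0 (Pp j a)))
      atTop (𝓝 (1/2)) := by
    have := (h1eps hj).mul (hmidM hj)
    rwa [one_mul ((1:ℝ)/2)] at this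
  have hup : Tendsto (fun a => (Pp j a * th2 (Pp j a) / th0 (Pp j a)) / (1 - epsl j a))
      atTop (𝓝 (1/2)) := by
    have := (hmidM hj).div (h1eps hj) one_ne_zero
    rwa [div_one] at this
  refine tendsto_of_tendsto_of_tendsto_of_le_of_le' hlo hup ?_ ?_
  · filter_upwards [eventually_gt_atTop (0:ℝ)] with a ha
    have hP := Pp_pos hj ha
    have hε1 : 0 < 1 - epsl j a := by have := epsl_lt_one hj ha; linarith
    have h0 := th0_pos (Pp_pos hj ha)
    have h2 := th2_pos (Pp_pos hj ha)
    have hC := Cc_pos (j := j) (a := a)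
    have hSpos := Sa_pos hj ha
    have h1 : ((1 - epsl j a) * (Cc j a * th2 (Pp j a))) / (Cc j a * th0 (Pp j a))
        ≤ Ma j a / Sa j a :=
      div_le_div₀ (le_trans (mul_nonneg hε1.le (mul_nonneg hC.le h2.le)) (le_Ma hj ha))
        (le_Ma hj ha) hSpos (Sa_le hj ha)
    have heq : ((1 - epsl j a) * (Cc j a * th2 (Pp j a))) / (Cc j a * th0 (Pp j a))
        = (1 - epsl j a) * (th2 (Pp j a) / th0 (Pp j a)) := by
      field_simp
    rw [heq] at h1
    calc (1 - epsl j a) * (Pp j a * th2 (Pp j a) / th0 (Pp j a))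
        = Pp j a * ((1 - epsl j a) * (th2 (Pp j a) / th0 (Pp j a))) := by ring
      _ ≤ Pp j a * (Ma j a / Sa j a) := by
          exact mul_le_mul_of_nonneg_left h1 hP.le
  · filter_upwards [eventually_gt_atTop (0:ℝ)] with a ha
    have hP := Pp_pos hj ha
    have hε1 : 0 < 1 - epsl j a := by have := epsl_lt_one hj ha; linarith
    have h0 := th0_pos (Pp_pos hj ha)
    have h2 := th2_pos (Pp_pos hj ha)
    have hC := Cc_pos (j := j) (a := a)
    have hSpos := Sa_pos hj ha
    have h1 : Ma j a / Sa j a ≤ (Cc j a * th2 (Pp j a)) /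
        ((1 - epsl j a) * (Cc j a * th0 (Pp j a))) :=
      div_le_div₀ (mul_nonneg hC.le h2.le) (Ma_le hj ha)
        (mul_pos hε1 (mul_pos hC h0)) (le_Sa hj ha)
    have heq : (Cc j a * th2 (Pp j a)) / ((1 - epsl j a) * (Cc j a * th0 (Pp j a)))
        = (th2 (Pp j a) / th0 (Pp j a)) / (1 - epsl j a) := by
      field_simp
    rw [heq] at h1
    calc Pp j a * (Ma j a / Sa j a)
        ≤ Pp j a * ((th2 (Pp j a) / th0 (Pp j a)) / (1 - epsl j a)) :=
          mul_le_mul_of_nonneg_left h1 hP.le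
      _ = Pp j a * th2 (Pp j a) / th0 (Pp j a) / (1 - epsl j a) := by ring

lemma hprod {j : ℕ} (hj : 1 ≤ j) :
    Tendsto (fun a => varA (etaHat j a) * varF (etaHat j a)) atTop (𝓝 (1/4)) := by
  have h := (hF2 hj).mul (hF1 hj)
  rw [show (1/2 : ℝ) * (1/2) = 1/4 by norm_num] at h
  refine h.congr' ?_
  filter_upwards [eventually_gt_atTop (0:ℝ)] with a ha
  have hP := (Pp_pos hj ha).ne'
  rw [prod_eq j a (Sa_pos hj ha).ne' (Ta_pos hj ha).ne']
  rw [div_mul_eq_mul_div, mul_comm (Pp j a), ← mul_assoc, mul_div_assoc, div_self hP, mul_one]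

theorem UC_eta_tendsto_one_half' (j : ℕ) (hj : 1 ≤ j) :
    Tendsto (fun a : ℝ => UC (etaHat j a)) atTop (nhds (1 / 2)) := by
  have h := (Real.continuous_sqrt.tendsto (1/4 : ℝ)).comp (hprod hj)
  rw [show Real.sqrt (1/4 : ℝ) = 1/2 by
    rw [show (1/4 : ℝ) = (1/2)^2 by norm_num, Real.sqrt_sq (by norm_num : (0:ℝ) ≤ 1/2)]] at h
  exact h

end UCeta

/-- For every fixed `j ∈ ℕ`, `UC(η_j^{a,0}) → 1/2` as `a → ∞`. -/
theorem UC_eta_tendsto_one_half (j : ℕ) (hj : 1 ≤ j) :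
    Tendsto (fun a : ℝ => UC (etaHat j a)) atTop (nhds (1 / 2)) :=
  UCeta.UC_eta_tendsto_one_half' j hj
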